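/- For H < -1 and each fixed such H, the limit as C → C_1⁺ (where C_1 = 2(H + sqrt(H^2-1))) of K(C,H) = ∫_0^T r(s)λ(s)/(r(s)^2 - 1) ds equals -π·sqrt(2 - 2H/sqrt(H^2-1)), and this limiting value b_2(H) = -π·sqrt(2 - 2H/sqrt(H^2-1)) satisfies b_2(H) < -2π for all H < -1. -/

import Mathlib

open Real Filter

/-- The explicit profile function `f` from the hyperbolic rotational construction. -/
noncomputable def profileF (H C : ℝ) (t : ℝ) : ℝ :=
  Real.sqrt ((C - 2 * H + Real.sqrt (4 + C ^ 2 - 4 * C * H) *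
      Real.sin (2 * Real.sqrt (H ^ 2 - 1) * t)) / (2 * H ^ 2 - 2))

noncomputable def profileR (H C : ℝ) (t : ℝ) : ℝ := profileF H C t / Real.sqrt (-C)

noncomputable def profileLam (H C : ℝ) (t : ℝ) : ℝ := H + (profileF H C t) ^ (-2 : ℤ)

/-- `K(C,H)`: the integral of `rλ/(r²-1)` over one period `T = π/√(H²-1)`. -/
noncomputable def Kint (H C : ℝ) : ℝ :=
  ∫ s in (0 : ℝ)..(π / Real.sqrt (H ^ 2 - 1)),
    profileR H C s * profileLam H C s / ((profileR H C s) ^ 2 - 1)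

/-!
Write `s = √(H² - 1)`. At `C₁ = 2(H + s)` the amplitude `√(4 + C² - 4CH)` of the oscillating
term of `f²` vanishes, so `f² ≡ 1/s`, `λ ≡ H + s`, `r² ≡ 1/(-2s(H + s))`, and the integrand is
the constant `-s √(2 - 2H/s)`; integrating over the period `π/s` gives
`K(C₁, H) = -π √(2 - 2H/s)`. Near `C₁` the minimum over `t` of `f²` stays above `-C > 0`, so
`r² > 1` uniformly in `t` and the integrand is jointly continuous in `(C, t)`. Hence `K(·, H)` is
continuous at `C₁` and the one-sided limit is `K(C₁, H)`. Finally `s < -H` gives `-2H/s > 2`.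
-/

open Topology Set MeasureTheory

theorem continuousOn_parametric_intervalIntegral {X E : Type*} [TopologicalSpace X]
    [NormedAddCommGroup E] [NormedSpace ℝ E] {μ : Measure ℝ} [NullSingletonClass μ]
    [IsLocallyFiniteMeasure μ] {f : X → ℝ → E} {U : Set X}
    (hf : ContinuousOn (Function.uncurry f) (U ×ˢ univ)) (a b : ℝ) :
    ContinuousOn (fun x => ∫ t in a..b, f x t ∂μ) U := by
  rw [continuousOn_iff_continuous_domRestrict]
  have hfU : Continuous fun p : U × ℝ => f p.1 p.2 :=
    hf.comp_continuous (f := fun p : U × ℝ => ((p.1 : X), p.2)) (by fun_prop)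
      fun p => ⟨p.1.2, trivial⟩
  exact intervalIntegral.continuous_parametric_intervalIntegral_of_continuous'
    (f := fun x : U => f x) hfU a b

lemma sqrt_sq_sub_one_mem_Ioo {H : ℝ} (hH : H < -1) : √(H ^ 2 - 1) ∈ Ioo 0 (-H) := by
  refine ⟨Real.sqrt_pos.mpr (by nlinarith), ?_⟩
  rw [Real.sqrt_lt' (by linarith)]
  linarith

noncomputable def profileRadicand (H C t : ℝ) : ℝ :=
  (C - 2 * H + √(4 + C ^ 2 - 4 * C * H) * Real.sin (2 * √(H ^ 2 - 1) * t)) / (2 * H ^ 2 - 2)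

noncomputable def profileRadicandMin (H C : ℝ) : ℝ :=
  (C - 2 * H - √(4 + C ^ 2 - 4 * C * H)) / (2 * H ^ 2 - 2)

noncomputable def profileIntegrand (H C t : ℝ) : ℝ :=
  profileR H C t * profileLam H C t / (profileR H C t ^ 2 - 1)

/-- The value `C₁` of the paper. -/
noncomputable def criticalC (H : ℝ) : ℝ := 2 * (H + √(H ^ 2 - 1))

/-- Since `r² = f² / (-C)`, these are the `C` for which `r > 1` along the whole period. -/
def admissibleC (H : ℝ) : Set ℝ := {C | C < 0 ∧ -C < profileRadicandMin H C}

lemma profileF_eq_sqrt_profileRadicand (H C t : ℝ) :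
    profileF H C t = √(profileRadicand H C t) := rfl

lemma Kint_eq_integral_profileIntegrand (H C : ℝ) :
    Kint H C = ∫ t in (0 : ℝ)..(π / √(H ^ 2 - 1)), profileIntegrand H C t := rfl

lemma profileRadicandMin_le {H : ℝ} (hH : H < -1) (C t : ℝ) :
    profileRadicandMin H C ≤ profileRadicand H C t := by
  have hden : (0 : ℝ) < 2 * H ^ 2 - 2 := by nlinarith
  unfold profileRadicandMin profileRadicand
  gcongr
  nlinarith [Real.neg_one_le_sin (2 * √(H ^ 2 - 1) * t), Real.sqrt_nonneg (4 + C ^ 2 - 4 * C * H)]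

lemma profileR_sq {H C t : ℝ} (hC : C < 0) (hN : 0 ≤ profileRadicand H C t) :
    profileR H C t ^ 2 = profileRadicand H C t / (-C) := by
  rw [profileR, div_pow, profileF_eq_sqrt_profileRadicand, Real.sq_sqrt hN,
    Real.sq_sqrt (by linarith)]

lemma continuousAt_profileIntegrand {H : ℝ} {p : ℝ × ℝ} (hC : p.1 < 0)
    (hN : -p.1 < profileRadicand H p.1 p.2) :
    ContinuousAt (Function.uncurry (profileIntegrand H)) p := by
  have hF : Continuous fun q : ℝ × ℝ => profileF H q.1 q.2 := by
    simp only [profileF_eq_sqrt_profileRadicand, profileRadicand]; fun_prop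
  have hF0 : profileF H p.1 p.2 ≠ 0 := by
    rw [profileF_eq_sqrt_profileRadicand]; exact (Real.sqrt_pos.mpr (by linarith)).ne'
  have hR : ContinuousAt (fun q : ℝ × ℝ => profileR H q.1 q.2) p :=
    hF.continuousAt.div (by fun_prop) (Real.sqrt_pos.mpr (by linarith)).ne'
  have hLam : ContinuousAt (fun q : ℝ × ℝ => profileLam H q.1 q.2) p :=
    continuousAt_const.add (hF.continuousAt.zpow₀ _ (Or.inl hF0))
  have hR2 : profileR H p.1 p.2 ^ 2 - 1 ≠ 0 := by
    rw [profileR_sq hC (by linarith), sub_ne_zero, ne_eq, div_eq_one_iff_eq (by linarith)]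
    exact hN.ne'
  exact (hR.mul hLam).div ((hR.pow 2).sub continuousAt_const) hR2

lemma isOpen_admissibleC (H : ℝ) : IsOpen (admissibleC H) :=
  (isOpen_lt continuous_id continuous_const).inter
    (isOpen_lt continuous_neg (by unfold profileRadicandMin; fun_prop))

lemma continuousOn_Kint {H : ℝ} (hH : H < -1) : ContinuousOn (Kint H) (admissibleC H) := by
  refine continuousOn_parametric_intervalIntegral (f := profileIntegrand H) (fun p hp => ?_) _ _
  exact (continuousAt_profileIntegrand hp.1.1
    (hp.1.2.trans_le (profileRadicandMin_le hH _ _))).continuousWithinAt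

lemma discriminant_criticalC {H : ℝ} (hH : H < -1) :
    4 + criticalC H ^ 2 - 4 * criticalC H * H = 0 := by
  rw [criticalC]
  linear_combination 4 * Real.sq_sqrt (by nlinarith : (0 : ℝ) ≤ H ^ 2 - 1)

lemma profileRadicand_criticalC {H : ℝ} (hH : H < -1) (t : ℝ) :
    profileRadicand H (criticalC H) t = (√(H ^ 2 - 1))⁻¹ := by
  obtain ⟨hs, -⟩ := sqrt_sq_sub_one_mem_Ioo hH
  have hs2 : √(H ^ 2 - 1) ^ 2 = H ^ 2 - 1 := Real.sq_sqrt (by nlinarith)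
  rw [profileRadicand, discriminant_criticalC hH, Real.sqrt_zero, zero_mul, add_zero, criticalC]
  generalize √(H ^ 2 - 1) = s at hs hs2 ⊢
  rw [div_eq_iff (by nlinarith), show 2 * H ^ 2 - 2 = 2 * s ^ 2 by linarith]
  field_simp
  ring

lemma profileRadicandMin_criticalC {H : ℝ} (hH : H < -1) :
    profileRadicandMin H (criticalC H) = (√(H ^ 2 - 1))⁻¹ := by
  rw [← profileRadicand_criticalC hH 0, profileRadicandMin, profileRadicand,
    discriminant_criticalC hH]
  simp

lemma criticalC_mem_admissibleC {H : ℝ} (hH : H < -1) : criticalC H ∈ admissibleC H := by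
  obtain ⟨hs, hsH⟩ := sqrt_sq_sub_one_mem_Ioo hH
  have hs2 : √(H ^ 2 - 1) ^ 2 = H ^ 2 - 1 := Real.sq_sqrt (by nlinarith)
  have hA : H + √(H ^ 2 - 1) < 0 := by linarith
  refine ⟨by rw [criticalC]; linarith, ?_⟩
  rw [profileRadicandMin_criticalC hH, ← one_div, lt_div_iff₀ hs, criticalC]
  nlinarith [mul_pos_of_neg_of_neg hA hA]

lemma div_sq_sub_one_eq_neg_mul {H s r q : ℝ} (hs : 0 < s) (hs2 : s ^ 2 = H ^ 2 - 1)
    (hA : H + s < 0) (hr : 0 < r) (hr2 : r ^ 2 = s⁻¹ / -(2 * (H + s))) (hq : 0 ≤ q)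
    (hq2 : q ^ 2 = 2 - 2 * H / s) :
    r * (H + s) / (r ^ 2 - 1) = -(s * q) := by
  have hden : r ^ 2 - 1 = (H + s) ^ 2 * r ^ 2 := by
    rw [hr2]; field_simp [hA.ne]; linear_combination -hs2
  have hprod : (H + s) * r * (s * q) = -1 := by
    have hsq : ((H + s) * r * (s * q)) ^ 2 = 1 := by
      rw [mul_pow, mul_pow, mul_pow, hr2, hq2]; field_simp [hA.ne]; linear_combination -hs2
    have hnonpos : (H + s) * r * (s * q) ≤ 0 :=
      mul_nonpos_of_nonpos_of_nonneg (mul_nonpos_of_nonpos_of_nonneg hA.le hr.le) (by positivity)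
    nlinarith
  rw [hden, div_eq_iff (mul_ne_zero (pow_ne_zero 2 hA.ne) (pow_ne_zero 2 hr.ne'))]
  linear_combination (H + s) * r * hprod

lemma profileIntegrand_criticalC {H : ℝ} (hH : H < -1) (t : ℝ) :
    profileIntegrand H (criticalC H) t = -(√(H ^ 2 - 1) * √(2 - 2 * H / √(H ^ 2 - 1))) := by
  obtain ⟨hs, hsH⟩ := sqrt_sq_sub_one_mem_Ioo hH
  have hC : criticalC H < 0 := by rw [criticalC]; linarith
  have hN := profileRadicand_criticalC hH t
  have hR2 := profileR_sq hC (hN ▸ inv_nonneg.mpr hs.le)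
  rw [hN, criticalC] at hR2
  have hR : 0 < profileR H (criticalC H) t := by
    rw [profileR, profileF_eq_sqrt_profileRadicand, hN]
    exact div_pos (Real.sqrt_pos.mpr (inv_pos.mpr hs)) (Real.sqrt_pos.mpr (by linarith))
  have hLam : profileLam H (criticalC H) t = H + √(H ^ 2 - 1) := by
    rw [profileLam, profileF_eq_sqrt_profileRadicand, hN, zpow_neg, zpow_two,
      Real.mul_self_sqrt (inv_nonneg.mpr hs.le), inv_inv]
  rw [profileIntegrand, hLam]
  exact div_sq_sub_one_eq_neg_mul hs (Real.sq_sqrt (by nlinarith)) (by linarith) hR hR2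
    (Real.sqrt_nonneg _)
    (Real.sq_sqrt (by have := div_neg_of_neg_of_pos (by linarith : 2 * H < 0) hs; linarith))

lemma Kint_criticalC {H : ℝ} (hH : H < -1) :
    Kint H (criticalC H) = -π * √(2 - 2 * H / √(H ^ 2 - 1)) := by
  obtain ⟨hs, -⟩ := sqrt_sq_sub_one_mem_Ioo hH
  rw [Kint_eq_integral_profileIntegrand]
  simp only [profileIntegrand_criticalC hH, intervalIntegral.integral_const, smul_eq_mul,
    sub_zero]
  field_simp

lemma two_lt_sqrt_two_sub_div {H : ℝ} (hH : H < -1) : 2 < √(2 - 2 * H / √(H ^ 2 - 1)) := by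
  obtain ⟨hs, hsH⟩ := sqrt_sq_sub_one_mem_Ioo hH
  rw [Real.lt_sqrt (by norm_num), lt_sub_iff_add_lt, ← lt_sub_iff_add_lt', div_lt_iff₀ hs]
  linarith

theorem stmt_19 (H : ℝ) (hH : H < -1) :
    Filter.Tendsto (fun C => Kint H C)
      (nhdsWithin (2 * (H + Real.sqrt (H ^ 2 - 1)))
        (Set.Ioi (2 * (H + Real.sqrt (H ^ 2 - 1)))))
      (nhds (-π * Real.sqrt (2 - 2 * H / Real.sqrt (H ^ 2 - 1)))) ∧
    -π * Real.sqrt (2 - 2 * H / Real.sqrt (H ^ 2 - 1)) < -2 * π := by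
  constructor
  · have hcont : ContinuousAt (Kint H) (criticalC H) :=
      (continuousOn_Kint hH).continuousAt
        ((isOpen_admissibleC H).mem_nhds (criticalC_mem_admissibleC hH))
    rw [← Kint_criticalC hH]
    exact hcont.tendsto.mono_left nhdsWithin_le_nhds
  · nlinarith [two_lt_sqrt_two_sub_div hH, pi_pos]
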